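/- Let $(a_n)$ and $(b_n)$ be strictly increasing sequences of positive integers with $L_n = b_n/a_n \to L = p/q$, where $p, q \in \mathbb{N}$ are relatively prime, and set $\delta_n = L_n - L$. Suppose $\delta_n > 0$ for all $n$ and $a_n \delta_n \to k \in (0, \infty)$. Then for every $m \in \mathbb{Z}$ and every $t > 0$, $\frac{1}{a_n} \sum_{j=1}^{\lfloor a_n t \rfloor} \widehat{f}_{m,L}(j L_n) \to \frac{1}{q} \sum_{\eta=1}^{q} \frac{1}{k} \int_0^{k t} \widehat{f}_{m,L}(\eta L + x)\, dx$ as $n \to \infty$. -/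

import Mathlib

/-!
The integer `q b_n - p a_n = q a_n δ_n` tends to `q k`, hence equals `q k` for large `n`, that is,
`L_n = L + k / a_n`. Split `j` into residue classes `j = η + q s` with `1 ≤ η ≤ q`: since `q L = p`,
`j L_n ≡ η L + (η / q + s) (q k / a_n)` modulo `1`, so by periodicity of `f̂_{m,L}` the class of `η`
contributes a Riemann sum of `x ↦ f̂_{m,L}(η L + x)` with mesh `q k / a_n` and about `a_n t / q`
nodes. That function is bounded and continuous off a countable set, so these Riemann sums, being
integrals of step functions that converge to it almost everywhere, tend to its integral over
`[0, k t]` by dominated convergence.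
-/

open Filter MeasureTheory

/-- `f_{m,L}(x) = (|x-m+1|^{1/3} + |x-m-L|^{1/3} - |x-m|^{1/3} - |x-m+1-L|^{1/3})^3`. -/
noncomputable def fmL (L : ℝ) (m : ℤ) (x : ℝ) : ℝ :=
  (|x - m + 1| ^ ((1 : ℝ) / 3) + |x - m - L| ^ ((1 : ℝ) / 3)
    - |x - m| ^ ((1 : ℝ) / 3) - |x - m + 1 - L| ^ ((1 : ℝ) / 3)) ^ 3

/-- `f̂_{m,L}(x) = f_{m,L}({x})`, where `{x}` is the fractional part of `x`. -/
noncomputable def fmLhat (L : ℝ) (m : ℤ) (x : ℝ) : ℝ := fmL L m (Int.fract x)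

open Topology Finset

theorem Int.exists_eventually_eq_of_tendsto_cast {α : Type*} {l : Filter α} [l.NeBot]
    {e : α → ℤ} {x : ℝ} (h : Tendsto (fun n => (e n : ℝ)) l (𝓝 x)) :
    ∃ z : ℤ, (z : ℝ) = x ∧ ∀ᶠ n in l, e n = z := by
  obtain ⟨z, rfl⟩ := Int.isClosedEmbedding_coe_real.isClosed_range.mem_of_tendsto h
    (Eventually.of_forall fun n => Set.mem_range_self _)
  have : Tendsto e l (𝓝 z) := Int.isClosedEmbedding_coe_real.isEmbedding.tendsto_nhds_iff.2 h
  rw [nhds_discrete, tendsto_pure] at this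
  exact ⟨z, rfl, this⟩

theorem eventually_div_eq_add_div_of_tendsto {a b : ℕ → ℕ} (ha0 : ∀ n, 0 < a n) {p q : ℕ}
    (hq : 0 < q) {L k : ℝ} (hL : L = p / q)
    (hk : Tendsto (fun n => (a n : ℝ) * ((b n : ℝ) / a n - L)) atTop (𝓝 k)) :
    ∀ᶠ n in atTop, (b n : ℝ) / a n = L + k / a n := by
  have hint : Tendsto (fun n => ((q * b n - p * a n : ℤ) : ℝ)) atTop (𝓝 (q * k)) := by
    refine (hk.const_mul (q : ℝ)).congr fun n => ?_
    have := ha0 n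
    rw [hL]
    field_simp
    push_cast
    ring
  obtain ⟨z, hz, hev⟩ := Int.exists_eventually_eq_of_tendsto_cast hint
  filter_upwards [hev] with n hn
  have hn' : ((q * b n - p * a n : ℤ) : ℝ) = q * k := by rw [hn, hz]
  push_cast at hn'
  have := ha0 n
  rw [hL]
  field_simp
  linarith

theorem Finset.sum_Icc_one_eq_sum_residue {M : Type*} [AddCommMonoid M] (F : ℤ → M) {q : ℕ}
    (hq : 0 < q) (N : ℤ) :
    ∑ j ∈ Icc 1 N, F j = ∑ η ∈ Icc 1 q, ∑ s ∈ range ((N - η) / q + 1).toNat, F (η + q * s) := by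
  have hq' : (0 : ℤ) < q := by exact_mod_cast hq
  have decomp : ∀ (j : ℤ) (η s : ℕ), 1 ≤ η → η ≤ q →
      ((j - 1) / q = s ∧ (j - 1) % q = η - 1 ↔ j = η + q * s) := by
    intro j η s h1 h2
    rw [Int.ediv_emod_unique hq']
    omega
  have hmem : ∀ η s : ℕ, s ∈ range ((N - η) / q + 1).toNat ↔ (η : ℤ) + q * s ≤ N := by
    intro η s
    rw [mem_range, Int.lt_toNat, Int.lt_add_one_iff, Int.le_ediv_iff_mul_le hq']
    constructor <;> intro <;> linarith
  have hrepr : ∀ j : ℤ, 1 ≤ j → 1 ≤ ((j - 1) % q).toNat + 1 ∧ ((j - 1) % q).toNat + 1 ≤ q ∧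
      j = ((((j - 1) % q).toNat + 1 : ℕ) : ℤ) + q * ((j - 1) / q).toNat := by
    intro j hj
    have h0 := Int.emod_nonneg (j - 1) hq'.ne'
    have hlt := Int.emod_lt_of_pos (j - 1) hq'
    have hd := Int.ediv_nonneg (by omega : 0 ≤ j - 1) hq'.le
    refine ⟨by omega, by omega, (decomp j _ _ (by omega) (by omega)).1 ⟨?_, ?_⟩⟩ <;> omega
  rw [sum_sigma']
  refine sum_nbij' (fun j => ⟨((j - 1) % q).toNat + 1, ((j - 1) / q).toNat⟩)
    (fun x => x.1 + q * x.2) ?_ ?_ ?_ ?_ ?_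
  · intro j hj
    rw [mem_Icc] at hj
    obtain ⟨h1, h2, h3⟩ := hrepr j hj.1
    simp only [mem_sigma, mem_Icc, hmem]
    exact ⟨⟨h1, h2⟩, h3 ▸ hj.2⟩
  · rintro ⟨η, s⟩ hx
    simp only [mem_sigma, mem_Icc, hmem] at hx
    rw [mem_Icc]
    constructor <;> nlinarith
  · intro j hj
    rw [mem_Icc] at hj
    exact ((hrepr j hj.1).2.2).symm
  · rintro ⟨η, s⟩ hx
    simp only [mem_sigma, mem_Icc] at hx
    obtain ⟨hd, hm⟩ := (decomp _ η s hx.1.1 hx.1.2).2 rfl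
    simp only [hd, hm, Int.toNat_natCast, Sigma.mk.injEq, heq_eq_eq, and_true]
    omega
  · intro j hj
    rw [mem_Icc] at hj
    exact congrArg F (hrepr j hj.1).2.2

theorem Function.Periodic.sum_Icc_mul_eq_sum_residue {g : ℝ → ℝ} (hg : Function.Periodic g 1)
    {p q : ℕ} (hq : 0 < q) {L : ℝ} (hL : L = p / q) (c : ℝ) (N : ℤ) :
    ∑ j ∈ Icc 1 N, g (j * (L + c)) =
      ∑ η ∈ Icc 1 q, ∑ s ∈ range ((N - η) / q + 1).toNat, g (η * L + (η / q + s) * (q * c)) := by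
  rw [sum_Icc_one_eq_sum_residue _ hq]
  refine sum_congr rfl fun η _ => sum_congr rfl fun s _ => ?_
  have hq' : (q : ℝ) ≠ 0 := by positivity
  rw [← (hg.nat_mul (s * p)) (η * L + (η / q + s) * (q * c))]
  congr 1
  rw [hL]
  field_simp
  push_cast
  ring

theorem abs_mul_toNat_ediv_sub_le {q η : ℕ} (hq : 0 < q) (hη : η ≤ q) {N : ℤ} (hN : 0 ≤ N) :
    |(q : ℝ) * ((N - η) / q + 1).toNat - N| ≤ q := by
  have hq' : (0 : ℤ) < q := by exact_mod_cast hq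
  have hdm := Int.mul_ediv_add_emod (N - η) q
  have h0 := Int.emod_nonneg (N - η) hq'.ne'
  have hlt := Int.emod_lt_of_pos (N - η) hq'
  have hd : 0 ≤ (N - η) / q + 1 := by
    by_contra! hneg
    nlinarith
  have key : |(q : ℤ) * ((N - η) / q + 1) - N| ≤ q := by
    rw [abs_le]; constructor <;> nlinarith
  rw [← Int.toNat_of_nonneg hd] at key
  exact_mod_cast key

theorem tendsto_toNat_ediv_mul {ι : Type*} {l : Filter ι} {a : ι → ℝ} (ha : Tendsto a l atTop)
    {q η : ℕ} (hq : 0 < q) (hη : η ≤ q) (c : ℝ) {t : ℝ} (ht : 0 ≤ t) :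
    Tendsto (fun n => (((⌊a n * t⌋ - η) / q + 1).toNat : ℝ) * (q * (c / a n))) l (𝓝 (c * t)) := by
  rw [← tendsto_sub_nhds_zero_iff]
  have hbound : Tendsto (fun n => |c| * (q + 1) / a n) l (𝓝 0) :=
    ha.const_div_atTop _
  refine squeeze_zero_norm' ?_ hbound
  filter_upwards [ha.eventually_gt_atTop 0] with n hn
  have hN : 0 ≤ ⌊a n * t⌋ := Int.floor_nonneg.2 (by positivity)
  have h1 := abs_mul_toNat_ediv_sub_le hq hη hN
  have h2 : |(⌊a n * t⌋ : ℝ) - a n * t| ≤ 1 := by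
    rw [abs_sub_comm, abs_of_nonneg (Int.fract_nonneg _)]
    exact (Int.fract_lt_one _).le
  set M : ℝ := (((⌊a n * t⌋ - η) / q + 1).toNat : ℝ)
  have hsplit : M * (q * (c / a n)) - c * t =
      c / a n * ((q * M - ⌊a n * t⌋) + (⌊a n * t⌋ - a n * t)) := by
    field_simp
    ring
  rw [Real.norm_eq_abs, hsplit, abs_mul, abs_div, abs_of_pos hn, div_mul_eq_mul_div]
  gcongr
  exact (abs_add_le _ _).trans (add_le_add h1 h2)

noncomputable def riemannTag (h θ x : ℝ) : ℝ := (θ + (⌈x / h⌉ - 1)) * h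

section riemannTag

variable {h θ : ℝ}

theorem measurable_riemannTag : Measurable (riemannTag h θ) := by
  unfold riemannTag; fun_prop

theorem riemannTag_eq_of_mem_Ioc (hh : 0 < h) {s : ℤ} {x : ℝ}
    (hx : x ∈ Set.Ioc (s * h) ((s + 1) * h)) : riemannTag h θ x = (θ + s) * h := by
  have : ⌈x / h⌉ = s + 1 := by
    rw [Int.ceil_eq_iff, lt_div_iff₀ hh, div_le_iff₀ hh]
    push_cast
    exact ⟨by linarith [hx.1], hx.2⟩
  simp [riemannTag, this]

theorem abs_riemannTag_sub_le (hh : 0 < h) (hθ : θ ∈ Set.Icc 0 1) (x : ℝ) :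
    |riemannTag h θ x - x| ≤ h := by
  have h1 : x ≤ ⌈x / h⌉ * h := (div_le_iff₀ hh).1 (Int.le_ceil _)
  have h2 : (⌈x / h⌉ - 1) * h < x := by
    rw [← lt_div_iff₀ hh]; linarith [Int.ceil_lt_add_one (x / h)]
  rw [riemannTag, abs_le]
  constructor <;> nlinarith [hθ.1, hθ.2]

theorem mul_sum_range_eq_integral_riemannTag (g : ℝ → ℝ) (hh : 0 < h) (M : ℕ) :
    h * ∑ s ∈ range M, g ((θ + s) * h) = ∫ x in 0..M * h, g (riemannTag h θ x) := by
  have cell : ∀ s : ℕ, ∀ᵐ x, x ∈ Set.uIoc (s * h) ((s + 1 : ℕ) * h) →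
      g (riemannTag h θ x) = g ((θ + s) * h) := by
    refine fun s => ae_of_all _ fun x hx => ?_
    rw [Set.uIoc_of_le (by gcongr; simp)] at hx
    push_cast at hx
    rw [riemannTag_eq_of_mem_Ioc (s := s) hh (mod_cast hx), Int.cast_natCast]
  have hint : ∀ s < M, IntervalIntegrable (fun x => g (riemannTag h θ x)) volume
      (s * h) ((s + 1 : ℕ) * h) := fun s _ =>
    intervalIntegrable_const.congr_ae <|
      ((ae_restrict_mem measurableSet_uIoc).and (ae_restrict_of_ae (cell s))).mono
        fun x hx => (hx.2 hx.1).symm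
  have hsum := intervalIntegral.sum_integral_adjacent_intervals hint
  rw [Nat.cast_zero, zero_mul] at hsum
  rw [← hsum, mul_sum]
  refine sum_congr rfl fun s _ => ?_
  rw [intervalIntegral.integral_congr_ae (cell s), intervalIntegral.integral_const, smul_eq_mul]
  push_cast
  ring

end riemannTag

theorem tendsto_mul_sum_range_of_ae_continuousAt {ι : Type*} {l : Filter ι}
    [l.IsCountablyGenerated] {g : ℝ → ℝ} (hg : Measurable g) {B : ℝ} (hB : ∀ x, |g x| ≤ B)
    (hcont : ∀ᵐ x, ContinuousAt g x) {θ : ℝ} (hθ : θ ∈ Set.Icc 0 1) {h : ι → ℝ}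
    (hh : ∀ n, 0 < h n) (hh0 : Tendsto h l (𝓝 0)) {M : ι → ℕ} {T : ℝ}
    (hM : Tendsto (fun n => M n * h n) l (𝓝 T)) :
    Tendsto (fun n => h n * ∑ s ∈ range (M n), g ((θ + s) * h n)) l (𝓝 (∫ x in 0..T, g x)) := by
  set G : ι → ℝ → ℝ := fun n x => g (riemannTag (h n) θ x)
  have hGmeas : ∀ n, Measurable (G n) := fun n => hg.comp measurable_riemannTag
  have hGint : ∀ n c d, IntervalIntegrable (G n) volume c d := fun n c d =>
    intervalIntegrable_iff.2 <| IntegrableOn.of_bound measure_Ioc_lt_top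
      (hGmeas n).aestronglyMeasurable B (ae_of_all _ fun x => hB _)
  have hmain : Tendsto (fun n => ∫ x in 0..T, G n x) l (𝓝 (∫ x in 0..T, g x)) := by
    refine intervalIntegral.tendsto_integral_filter_of_dominated_convergence (fun _ => B)
      (Eventually.of_forall fun n => (hGmeas n).aestronglyMeasurable)
      (Eventually.of_forall fun n => ae_of_all _ fun x _ => hB _) intervalIntegrable_const ?_
    filter_upwards [hcont] with x hx _
    exact hx.tendsto.comp <| tendsto_iff_norm_sub_tendsto_zero.2 <|
      squeeze_zero (fun _ => norm_nonneg _) (fun n => abs_riemannTag_sub_le (hh n) hθ x) hh0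
  have htail : Tendsto (fun n => ∫ x in T..M n * h n, G n x) l (𝓝 0) := by
    refine squeeze_zero_norm (fun n => ?_) (by simpa using (hM.sub_const T).abs.const_mul B)
    simpa [abs_sub_comm] using intervalIntegral.norm_integral_le_of_norm_le_const
      (f := G n) (fun x _ => hB (riemannTag (h n) θ x))
  simpa [mul_sum_range_eq_integral_riemannTag g (hh _),
    intervalIntegral.integral_add_adjacent_intervals (hGint _ 0 T) (hGint _ T _)]
    using hmain.add htail

theorem exists_bound_comp_fract {f : ℝ → ℝ} (hf : Continuous f) :
    ∃ B, ∀ x, |f (Int.fract x)| ≤ B := by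
  obtain ⟨B, hB⟩ := (isCompact_Icc (a := (0 : ℝ)) (b := 1)).exists_bound_of_continuousOn
    hf.continuousOn
  exact ⟨B, fun x => hB _ ⟨Int.fract_nonneg x, (Int.fract_lt_one x).le⟩⟩

theorem ae_continuousAt_comp_fract_add {f : ℝ → ℝ} (hf : Continuous f) (c : ℝ) :
    ∀ᵐ x, ContinuousAt (fun x => f (Int.fract (c + x))) x := by
  filter_upwards [(Set.countable_range fun z : ℤ => (z : ℝ) - c).ae_notMem volume] with x hx
  have hfract : ContinuousAt Int.fract (c + x) := by
    refine continuousAt_fract fun h => hx ⟨⌊c + x⌋, ?_⟩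
    linarith
  exact hf.continuousAt.comp (hfract.comp (continuous_const_add c).continuousAt)

theorem continuous_fmL (L : ℝ) (m : ℤ) : Continuous (fmL L m) := by
  unfold fmL
  fun_prop (disch := norm_num)

theorem periodic_fmLhat (L : ℝ) (m : ℤ) : Function.Periodic (fmLhat L m) 1 := fun x => by
  simp [fmLhat, Int.fract_add_one]

theorem sum_tendsto_positive_delta_case_general (a b : ℕ → ℕ) (ha : StrictMono a) (ha0 : ∀ n, 0 < a n)
    (p q : ℕ) (hq : 0 < q) (L : ℝ) (hL : L = (p : ℝ) / (q : ℝ)) (k : ℝ) (hkpos : 0 < k)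
    (hk : Tendsto (fun n => (a n : ℝ) * ((b n : ℝ) / (a n : ℝ) - L)) atTop (nhds k)) :
    ∀ (m : ℤ) (t : ℝ), 0 < t →
      Tendsto (fun n =>
        (1 / (a n : ℝ)) * ∑ j ∈ Finset.Icc (1 : ℤ) ⌊(a n : ℝ) * t⌋,
            fmLhat L m ((j : ℝ) * ((b n : ℝ) / (a n : ℝ))))
        atTop
        (nhds ((1 / (q : ℝ)) * ∑ η ∈ Finset.Icc 1 q,
          (1 / k) * ∫ x in (0 : ℝ)..(k * t), fmLhat L m ((η : ℝ) * L + x))) := by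
  intro m t ht
  have hatop : Tendsto (fun n => (a n : ℝ)) atTop atTop :=
    tendsto_natCast_atTop_atTop.comp ha.tendsto_atTop
  set h : ℕ → ℝ := fun n => q * (k / a n)
  have hpos : ∀ n, 0 < h n := fun n => by have := ha0 n; positivity
  obtain ⟨B, hB⟩ := exists_bound_comp_fract (continuous_fmL L m)
  have hriemann : ∀ η ∈ Icc 1 q, Tendsto
      (fun n => h n * ∑ s ∈ range ((⌊(a n : ℝ) * t⌋ - η) / q + 1).toNat,
        fmLhat L m (η * L + (η / q + s) * h n))
      atTop (𝓝 (∫ x in 0..k * t, fmLhat L m (η * L + x))) := fun η hη =>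
    tendsto_mul_sum_range_of_ae_continuousAt
      ((continuous_fmL L m).measurable.comp (measurable_fract.comp (measurable_const_add _)))
      (fun x => hB _) (ae_continuousAt_comp_fract_add (continuous_fmL L m) _)
      ⟨by positivity, div_le_one_of_le₀ (mod_cast (mem_Icc.1 hη).2) (Nat.cast_nonneg q)⟩ hpos
      (by simpa using (hatop.const_div_atTop k).const_mul (q : ℝ))
      (tendsto_toNat_ediv_mul hatop hq (mem_Icc.1 hη).2 k ht.le)
  have hsplit : ∀ᶠ n in atTop, (1 / (a n : ℝ)) * ∑ j ∈ Icc (1 : ℤ) ⌊(a n : ℝ) * t⌋,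
      fmLhat L m (j * ((b n : ℝ) / a n)) = 1 / q * ∑ η ∈ Icc 1 q, 1 / k *
        (h n * ∑ s ∈ range ((⌊(a n : ℝ) * t⌋ - η) / q + 1).toNat,
          fmLhat L m (η * L + (η / q + s) * h n)) := by
    filter_upwards [eventually_div_eq_add_div_of_tendsto ha0 hq hL hk] with n hn
    rw [hn, (periodic_fmLhat L m).sum_Icc_mul_eq_sum_residue hq hL, mul_sum, mul_sum]
    have hcoef : ∀ X : ℝ, 1 / (a n : ℝ) * X = 1 / q * (1 / k * (q * (k / a n) * X)) := fun X => by
      have := ha0 n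
      field_simp
    exact sum_congr rfl fun η _ => hcoef _
  exact (tendsto_const_nhds.mul (tendsto_finsetSum _ fun η hη =>
    (hriemann η hη).const_mul _)).congr' (EventuallyEq.symm hsplit)

/-- If `L = p/q` in lowest terms, `L_n = b_n/a_n → L`, `δ_n > 0` for all `n`, and
`a_n δ_n → k ∈ (0,∞)`, then for every `m ∈ ℤ` and `t > 0`,
`(1/a_n) ∑_{j=1}^{⌊a_n t⌋} f̂_{m,L}(j L_n)
  → (1/q) ∑_{η=1}^{q} (1/k) ∫_0^{kt} f̂_{m,L}(ηL + x) dx`. -/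
theorem sum_tendsto_positive_delta_case (a b : ℕ → ℕ) (ha : StrictMono a) (hb : StrictMono b)
    (ha0 : ∀ n, 0 < a n) (hb0 : ∀ n, 0 < b n)
    (p q : ℕ) (hp : 0 < p) (hq : 0 < q) (hpq : Nat.Coprime p q)
    (L : ℝ) (hL : L = (p : ℝ) / (q : ℝ))
    (hconv : Tendsto (fun n => (b n : ℝ) / (a n : ℝ)) atTop (nhds L))
    (hpos : ∀ n, 0 < (b n : ℝ) / (a n : ℝ) - L)
    (k : ℝ) (hkpos : 0 < k)
    (hk : Tendsto (fun n => (a n : ℝ) * ((b n : ℝ) / (a n : ℝ) - L)) atTop (nhds k)) :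
    ∀ (m : ℤ) (t : ℝ), 0 < t →
      Tendsto (fun n =>
        (1 / (a n : ℝ)) * ∑ j ∈ Finset.Icc (1 : ℤ) ⌊(a n : ℝ) * t⌋,
            fmLhat L m ((j : ℝ) * ((b n : ℝ) / (a n : ℝ))))
        atTop
        (nhds ((1 / (q : ℝ)) * ∑ η ∈ Finset.Icc 1 q,
          (1 / k) * ∫ x in (0 : ℝ)..(k * t), fmLhat L m ((η : ℝ) * L + x))) :=
  sum_tendsto_positive_delta_case_general a b ha ha0 p q hq L hL k hkpos hk
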